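/- arXiv:2507.05908 — 2 statements merged into one kernel-verified Lean document; each statement's English description precedes it below -/
import Mathlib

section
/- Let n ≥ 1 be an integer, let α > 1, let r₀ > 0, and let m, k be real numbers with k ≥ 0 and m/(α-1) - n/2 - k/2 > 0. Then, as t → 0⁺, t^{-n/2} · ∫_{{x ∈ ℝⁿ : ‖x‖ ≥ r₀}} (1 + (α-1)‖x‖²/(8t))^{-m/(α-1)} · ‖x‖^k dx = o(t^{k/2}). -/
open MeasureTheory Real Filter Asymptotics Topology

/-!
With `β = m/(α-1)`, dropping the `1` bounds the kernel on `{‖x‖ ≥ r₀}` by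
`(1 + c‖x‖²/t)^{-β} ≤ (t/c)^β ‖x‖^{-2β}`. Since `2β - k > n`, the function `‖x‖^{k-2β}` is
integrable away from the origin, so the integral is `O(t^β)`, and
`t^{-n/2} t^β = t^{β-n/2} = o(t^{k/2})` because `β - n/2 > k/2`.
-/

lemma isLittleO_rpow_rpow_nhdsGT_zero {a b : ℝ} (hba : b < a) :
    (fun t : ℝ => t ^ a) =o[𝓝[>] 0] fun t => t ^ b := by
  have hab : 0 < a - b := sub_pos.2 hba
  refine (isLittleO_iff_tendsto' (eventually_nhdsWithin_of_forall fun t (ht : 0 < t) h0 =>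
    absurd h0 (rpow_pos_of_pos ht _).ne')).2 ?_
  have hlim : Tendsto (fun t : ℝ => t ^ (a - b)) (𝓝[>] 0) (𝓝 0) := by
    simpa [zero_rpow hab.ne'] using
      (continuousAt_rpow_const 0 (a - b) (Or.inr hab.le)).tendsto.mono_left nhdsWithin_le_nhds
  exact hlim.congr' (eventually_nhdsWithin_of_forall fun t ht => rpow_sub ht a b)

lemma rpow_neg_le_mul_one_add_rpow_neg {r₀ r s : ℝ} (hr₀ : 0 < r₀) (hr : r₀ ≤ r) (hs : 0 ≤ s) :
    r ^ (-s) ≤ (1 + r₀⁻¹) ^ s * (1 + r) ^ (-s) := by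
  have hr_pos : 0 < r := hr₀.trans_le hr
  have hC : 0 < 1 + r₀⁻¹ := by positivity
  have h_one_add : 1 + r ≤ (1 + r₀⁻¹) * r := by
    have : 1 ≤ r₀⁻¹ * r := by rw [inv_mul_eq_div, one_le_div hr₀]; exact hr
    linarith
  calc r ^ (-s) = (1 + r₀⁻¹) ^ s * ((1 + r₀⁻¹) * r) ^ (-s) := by
        rw [mul_rpow hC.le hr_pos.le, ← mul_assoc, ← rpow_add hC, add_neg_cancel, rpow_zero,
          one_mul]
    _ ≤ (1 + r₀⁻¹) ^ s * (1 + r) ^ (-s) := mul_le_mul_of_nonneg_left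
        (rpow_le_rpow_of_nonpos (by positivity) h_one_add (neg_nonpos.2 hs)) (by positivity)

lemma one_add_mul_sq_div_rpow_neg_le {a t r β : ℝ} (ha : 0 < a) (ht : 0 < t) (hr : 0 < r)
    (hβ : 0 ≤ β) : (1 + a * r ^ 2 / t) ^ (-β) ≤ (t / a) ^ β * r ^ (-(2 * β)) := by
  calc (1 + a * r ^ 2 / t) ^ (-β) ≤ (a * r ^ 2 / t) ^ (-β) :=
        rpow_le_rpow_of_nonpos (by positivity) (by linarith) (by linarith)
    _ = (t / a) ^ β * r ^ (-(2 * β)) := by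
        rw [show a * r ^ 2 / t = (t / a)⁻¹ * r ^ (2 : ℝ) by rw [rpow_two]; field_simp,
          mul_rpow (by positivity) (by positivity), inv_rpow (by positivity),
          rpow_neg (by positivity), inv_inv, ← rpow_mul hr.le]
        ring_nf

section HaarMeasure

variable {E : Type*} [NormedAddCommGroup E] [NormedSpace ℝ E] [FiniteDimensional ℝ E]
  [MeasurableSpace E] [BorelSpace E] {μ : Measure E} [μ.IsAddHaarMeasure]

lemma integrableOn_norm_rpow_setOf_le_norm {r₀ s : ℝ} (hr₀ : 0 < r₀)
    (hs : s < -(Module.finrank ℝ E : ℝ)) :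
    IntegrableOn (fun x : E => ‖x‖ ^ s) {x | r₀ ≤ ‖x‖} μ := by
  refine (((integrable_one_add_norm (μ := μ) (r := -s) (by linarith)).const_mul
    ((1 + r₀⁻¹) ^ (-s))).integrableOn).mono'
    (measurable_norm.pow_const s).aestronglyMeasurable ?_
  filter_upwards [ae_restrict_mem (measurableSet_le measurable_const measurable_norm)] with x hx
  rw [norm_of_nonneg (rpow_nonneg (norm_nonneg x) s)]
  simpa using rpow_neg_le_mul_one_add_rpow_neg (s := -s) hr₀ hx (by
    linarith [(Module.finrank ℝ E).cast_nonneg (α := ℝ)])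

lemma setIntegral_one_add_mul_sq_div_rpow_le {a t β k r₀ : ℝ} (ha : 0 < a) (ht : 0 < t)
    (hβ : 0 ≤ β) (hr₀ : 0 < r₀) (hdecay : k - 2 * β < -(Module.finrank ℝ E : ℝ)) :
    ∫ x in {x : E | r₀ ≤ ‖x‖}, (1 + a * ‖x‖ ^ 2 / t) ^ (-β) * ‖x‖ ^ k ∂μ ≤
      (t / a) ^ β * ∫ x in {x : E | r₀ ≤ ‖x‖}, ‖x‖ ^ (k - 2 * β) ∂μ := by
  rw [← integral_const_mul]
  refine integral_mono_of_nonneg (Eventually.of_forall fun x => by positivity)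
    ((integrableOn_norm_rpow_setOf_le_norm hr₀ hdecay).const_mul _) ?_
  filter_upwards [ae_restrict_mem (measurableSet_le measurable_const measurable_norm)] with x hx
  have hx_pos : 0 < ‖x‖ := hr₀.trans_le hx
  calc (1 + a * ‖x‖ ^ 2 / t) ^ (-β) * ‖x‖ ^ k ≤ (t / a) ^ β * ‖x‖ ^ (-(2 * β)) * ‖x‖ ^ k := by
        gcongr
        exact one_add_mul_sq_div_rpow_neg_le ha ht hx_pos hβ
    _ = (t / a) ^ β * ‖x‖ ^ (k - 2 * β) := by
        rw [mul_assoc, ← rpow_add hx_pos, neg_add_eq_sub]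

lemma isBigO_setIntegral_one_add_mul_sq_div_rpow {a β k r₀ : ℝ} (ha : 0 < a) (hβ : 0 ≤ β)
    (hr₀ : 0 < r₀) (hdecay : k - 2 * β < -(Module.finrank ℝ E : ℝ)) :
    (fun t => ∫ x in {x : E | r₀ ≤ ‖x‖}, (1 + a * ‖x‖ ^ 2 / t) ^ (-β) * ‖x‖ ^ k ∂μ)
      =O[𝓝[>] 0] fun t => t ^ β := by
  set J := ∫ x in {x : E | r₀ ≤ ‖x‖}, ‖x‖ ^ (k - 2 * β) ∂μ
  refine IsBigO.of_bound (a ^ (-β) * J) (eventually_nhdsWithin_of_forall fun t (ht : 0 < t) => ?_)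
  have hnonneg : 0 ≤ ∫ x in {x : E | r₀ ≤ ‖x‖}, (1 + a * ‖x‖ ^ 2 / t) ^ (-β) * ‖x‖ ^ k ∂μ :=
    setIntegral_nonneg (measurableSet_le measurable_const measurable_norm) fun x _ => by positivity
  rw [norm_of_nonneg hnonneg, norm_of_nonneg (rpow_nonneg ht.le β)]
  calc _ ≤ (t / a) ^ β * J := setIntegral_one_add_mul_sq_div_rpow_le ha ht hβ hr₀ hdecay
    _ = a ^ (-β) * J * t ^ β := by
        rw [div_rpow ht.le ha.le, rpow_neg ha.le]
        ring

end HaarMeasure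

theorem stmt11_general (n : ℕ) (α : ℝ) (hα : 1 < α) (r₀ : ℝ) (hr₀ : 0 < r₀)
    (m k : ℝ) (hk : 0 ≤ k) (hmk : 0 < m / (α - 1) - (n : ℝ) / 2 - k / 2) :
    (fun t : ℝ => t ^ (-(n : ℝ) / 2) *
        ∫ x in {x : EuclideanSpace ℝ (Fin n) | r₀ ≤ ‖x‖},
          (1 + (α - 1) * ‖x‖ ^ 2 / (8 * t)) ^ (-(m / (α - 1))) * ‖x‖ ^ k)
      =o[𝓝[>] (0 : ℝ)] fun t : ℝ => t ^ (k / 2) := by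
  set β := m / (α - 1)
  have hkernel : ∀ (t : ℝ) (x : EuclideanSpace ℝ (Fin n)),
      (α - 1) * ‖x‖ ^ 2 / (8 * t) = (α - 1) / 8 * ‖x‖ ^ 2 / t := fun _ _ => by ring
  simp_rw [hkernel]
  have hn_nonneg : (0 : ℝ) ≤ n := n.cast_nonneg
  have hintegral := isBigO_setIntegral_one_add_mul_sq_div_rpow (μ := volume)
    (E := EuclideanSpace ℝ (Fin n)) (k := k) (by linarith : 0 < (α - 1) / 8)
    (by linarith : 0 ≤ β) hr₀ (by rw [finrank_euclideanSpace_fin]; linarith)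
  refine (((isBigO_refl (fun t : ℝ => t ^ (-(n : ℝ) / 2)) _).mul hintegral).trans_eventuallyEq
    (eventually_nhdsWithin_of_forall fun t (ht : 0 < t) => ?_)).trans_isLittleO
    (isLittleO_rpow_rpow_nhdsGT_zero (a := β - n / 2) (by linarith))
  dsimp only
  rw [← rpow_add ht]
  ring_nf

/-- For `α > 1`, `r₀ > 0`, `k ≥ 0` and `m/(α-1) - n/2 - k/2 > 0`, as
`t → 0⁺`:
`t^{-n/2} ∫_{{‖x‖ ≥ r₀}} (1 + (α-1)‖x‖²/(8t))^{-m/(α-1)} ‖x‖^k dx = o(t^{k/2})`. -/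
theorem stmt11 (n : ℕ) (hn : 1 ≤ n) (α : ℝ) (hα : 1 < α) (r₀ : ℝ) (hr₀ : 0 < r₀)
    (m k : ℝ) (hk : 0 ≤ k) (hmk : 0 < m / (α - 1) - (n : ℝ) / 2 - k / 2) :
    (fun t : ℝ => t ^ (-(n : ℝ) / 2) *
        ∫ x in {x : EuclideanSpace ℝ (Fin n) | r₀ ≤ ‖x‖},
          (1 + (α - 1) * ‖x‖ ^ 2 / (8 * t)) ^ (-(m / (α - 1))) * ‖x‖ ^ k)
      =o[𝓝[>] (0 : ℝ)] fun t : ℝ => t ^ (k / 2) :=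
  stmt11_general n α hα r₀ hr₀ m k hk hmk
end

section
/- Let n ≥ 1 be an integer, let k ≥ 0 and m be real numbers, and let α > 0 satisfy either (0 < α < 1 and m > 0) or (α > 1 and m/(α-1) - n/2 - k/2 > 0). Define H(r) := (1 + (α-1)r²/8)_+^{1/(1-α)} for r ≥ 0. Let W ⊆ ℝⁿ be a Lebesgue measurable set and let F : ℝⁿ → ℝ be measurable, bounded on W, and satisfy F(x)/‖x‖^k → 0 as x → 0 (x ≠ 0). Then, as t → 0⁺, t^{-n/2} · ∫_W H(‖x‖/√t)^m · F(x) dx = o(t^{k/2}). -/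
open MeasureTheory Real Filter Asymptotics Topology

/-- The profile `H(r) := (1 + (α-1)r²/8)₊^{1/(1-α)}` of the Gagliardo–Nirenberg
extremal functions. -/
noncomputable def Hprofile (α r : ℝ) : ℝ :=
  (max (1 + (α - 1) * r ^ 2 / 8) 0) ^ (1 / (1 - α))

/-!
Substituting `x = √t • y` turns `t^{-n/2} ∫_W H(‖x‖/√t)^m F(x) dx / t^{k/2}` into
`∫ H(‖y‖)^m ‖y‖^k R(√t • y) dy` with `R = 1_W F / ‖·‖^k` (up to the null set `{0}`).
The weight `H(‖y‖)^m ‖y‖^k` is integrable: it has compact support when `α < 1` and decays like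
`‖y‖^{k - 2m/(α-1)}` when `α > 1`. Since `R` is bounded and tends to `0` at the origin,
dominated convergence sends the integral to `0` as `t → 0⁺`.
-/
lemma Hprofile_nonneg (α r : ℝ) : 0 ≤ Hprofile α r :=
  rpow_nonneg (le_max_right _ _) _

lemma continuous_Hprofile_rpow (α : ℝ) {m : ℝ} (hm : 0 ≤ m) :
    Continuous fun r => Hprofile α r ^ m := by
  refine Continuous.rpow_const ?_ fun _ => Or.inr hm
  refine continuous_iff_continuousAt.2 fun r => ContinuousAt.rpow_const (by fun_prop) ?_
  rcases le_or_gt α 1 with hα | hα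
  · exact Or.inr (one_div_nonneg.2 (by linarith))
  · exact Or.inl (lt_max_of_lt_left (by positivity)).ne'

lemma Hprofile_eq_zero_of_lt_one {α r : ℝ} (hα : α < 1) (hr : 8 / (1 - α) ≤ r ^ 2) :
    Hprofile α r = 0 := by
  have hbase : 1 + (α - 1) * r ^ 2 / 8 ≤ 0 := by
    rw [div_le_iff₀ (by linarith)] at hr
    nlinarith
  rw [Hprofile, max_eq_right hbase, zero_rpow (one_div_ne_zero (by linarith))]

lemma Hprofile_rpow_eq {α : ℝ} (hα : 1 < α) (m r : ℝ) :
    Hprofile α r ^ m = (1 + (α - 1) / 8 * r ^ 2) ^ (-(m / (α - 1))) := by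
  have hbase : 0 ≤ 1 + (α - 1) * r ^ 2 / 8 := by positivity
  rw [Hprofile, max_eq_left hbase, ← rpow_mul hbase]
  congr 1
  · ring
  · field_simp [(by linarith : (1 : ℝ) - α ≠ 0), (by linarith : α - 1 ≠ 0)]
    ring

lemma Hprofile_rpow_le {α m : ℝ} (hα : 1 < α) (hm : 0 ≤ m) (r : ℝ) :
    Hprofile α r ^ m ≤
      min 1 ((α - 1) / 8) ^ (-(m / (α - 1))) * (1 + r ^ 2) ^ (-(m / (α - 1))) := by
  have ha : 0 < min 1 ((α - 1) / 8) := lt_min one_pos (by linarith)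
  rw [Hprofile_rpow_eq hα, ← mul_rpow ha.le (by positivity)]
  refine rpow_le_rpow_of_nonpos (by positivity) ?_ (neg_nonpos.2 (div_nonneg hm (by linarith)))
  nlinarith [min_le_left 1 ((α - 1) / 8), min_le_right 1 ((α - 1) / 8), sq_nonneg r]

section Integrability

variable {E : Type*} [NormedAddCommGroup E] [NormedSpace ℝ E] [FiniteDimensional ℝ E]
  [MeasurableSpace E] [BorelSpace E] (μ : Measure E) [μ.IsAddHaarMeasure]

lemma integrable_Hprofile_rpow_mul_norm_rpow_of_lt_one {α m : ℝ} (hα : α < 1) (hm : 0 < m)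
    {s : ℝ} (hs : 0 ≤ s) :
    Integrable (fun y : E => Hprofile α ‖y‖ ^ m * ‖y‖ ^ s) μ := by
  refine Continuous.integrable_of_hasCompactSupport
    (((continuous_Hprofile_rpow α hm.le).comp continuous_norm).mul
      ((continuous_rpow_const hs).comp continuous_norm)) ?_
  refine HasCompactSupport.intro (isCompact_closedBall (0 : E) √(8 / (1 - α))) fun y hy => ?_
  rw [Metric.mem_closedBall, dist_zero_right, not_le] at hy
  rw [Hprofile_eq_zero_of_lt_one hα (lt_sq_of_sqrt_lt hy).le, zero_rpow hm.ne', zero_mul]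

lemma integrable_Hprofile_rpow_mul_norm_rpow_of_one_lt {α m s : ℝ} (hα : 1 < α) (hm : 0 ≤ m)
    (hs : 0 ≤ s) (hdim : (Module.finrank ℝ E : ℝ) + s < 2 * (m / (α - 1))) :
    Integrable (fun y : E => Hprofile α ‖y‖ ^ m * ‖y‖ ^ s) μ := by
  set p := m / (α - 1)
  have hdecay := (integrable_rpow_neg_one_add_norm_sq (μ := μ) (r := 2 * p - s)
    (by linarith)).const_mul (min 1 ((α - 1) / 8) ^ (-p))
  refine hdecay.mono' (((continuous_Hprofile_rpow α hm).comp continuous_norm).mul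
    ((continuous_rpow_const hs).comp continuous_norm)).aestronglyMeasurable
    (Eventually.of_forall fun y => ?_)
  have h1 : 0 < 1 + ‖y‖ ^ 2 := by positivity
  have ha : 0 < min 1 ((α - 1) / 8) := lt_min one_pos (by linarith)
  have hnorm : ‖y‖ ^ s ≤ (1 + ‖y‖ ^ 2) ^ (s / 2) := by
    rw [rpow_div_two_eq_sqrt s h1.le]
    exact rpow_le_rpow (norm_nonneg y) (le_sqrt_of_sq_le (by linarith)) hs
  rw [norm_of_nonneg (mul_nonneg (rpow_nonneg (Hprofile_nonneg _ _) _) (by positivity))]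
  calc Hprofile α ‖y‖ ^ m * ‖y‖ ^ s
      ≤ min 1 ((α - 1) / 8) ^ (-p) * (1 + ‖y‖ ^ 2) ^ (-p) * (1 + ‖y‖ ^ 2) ^ (s / 2) :=
        mul_le_mul (Hprofile_rpow_le hα hm ‖y‖) hnorm (by positivity) (by positivity)
    _ = min 1 ((α - 1) / 8) ^ (-p) * (1 + ‖y‖ ^ 2) ^ (-(2 * p - s) / 2) := by
        rw [mul_assoc, ← rpow_add h1]
        ring_nf

end Integrability

section Rescaling

variable {E : Type*} [NormedAddCommGroup E] [NormedSpace ℝ E] [MeasurableSpace E]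
  (μ : Measure E)

lemma setIntegral_comp_norm_div_mul_eq [FiniteDimensional ℝ E] [BorelSpace E]
    [μ.IsAddHaarMeasure] (φ : ℝ → ℝ) (F : E → ℝ) {W : Set E} (hW : MeasurableSet W) {c : ℝ}
    (hc : 0 < c) :
    ∫ x in W, φ (‖x‖ / c) * F x ∂μ =
      c ^ Module.finrank ℝ E * ∫ y, φ ‖y‖ * W.indicator F (c • y) ∂μ := by
  have hφ : ∀ y : E, φ (‖c • y‖ / c) = φ ‖y‖ := fun y => by
    rw [norm_smul, norm_of_nonneg hc.le, mul_div_cancel_left₀ _ hc.ne']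
  calc ∫ x in W, φ (‖x‖ / c) * F x ∂μ
      = ∫ x, W.indicator (fun x => φ (‖x‖ / c) * F x) x ∂μ := (integral_indicator hW).symm
    _ = c ^ Module.finrank ℝ E * ∫ y, W.indicator (fun x => φ (‖x‖ / c) * F x) (c • y) ∂μ := by
        rw [Measure.integral_comp_smul_of_nonneg μ _ c (hR := hc.le), smul_eq_mul,
          mul_inv_cancel_left₀ (pow_ne_zero _ hc.ne')]
    _ = c ^ Module.finrank ℝ E * ∫ y, φ ‖y‖ * W.indicator F (c • y) ∂μ := by
        simp_rw [Set.indicator_mul_right, hφ]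

lemma integral_mul_comp_smul_div_rpow [NullSingletonClass μ] (h G : E → ℝ) (k : ℝ) {c : ℝ}
    (hc : 0 < c) :
    (∫ y, h y * G (c • y) ∂μ) / c ^ k = ∫ y, h y * ‖y‖ ^ k * (G (c • y) / ‖c • y‖ ^ k) ∂μ := by
  rw [← integral_div]
  refine integral_congr_ae ?_
  filter_upwards [μ.ae_ne 0] with y hy
  have hy' : 0 < ‖y‖ ^ k := rpow_pos_of_pos (norm_pos_iff.2 hy) k
  rw [norm_smul, norm_of_nonneg hc.le, mul_rpow hc.le (norm_nonneg y)]
  field_simp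

end Rescaling

lemma tendsto_smul_nhdsNE_zero {E : Type*} [NormedAddCommGroup E] [NormedSpace ℝ E] {y : E}
    (hy : y ≠ 0) : Tendsto (fun c : ℝ => c • y) (𝓝[>] 0) (𝓝[≠] 0) := by
  refine tendsto_nhdsWithin_iff.2 ⟨?_, ?_⟩
  · exact ((by fun_prop : Continuous fun c : ℝ => c • y).tendsto' 0 0 (zero_smul ℝ y)).mono_left
      nhdsWithin_le_nhds
  · filter_upwards [self_mem_nhdsWithin] with c hc
    exact smul_ne_zero (ne_of_gt hc) hy

lemma tendsto_integral_mul_comp_smul_nhdsGT_zero {E : Type*} [NormedAddCommGroup E]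
    [NormedSpace ℝ E] [MeasurableSpace E] [BorelSpace E] {μ : Measure E} [NullSingletonClass μ]
    {g R : E → ℝ} (hg : Integrable g μ) (hR : Measurable R) {B : ℝ}
    (hRB : ∀ x ≠ 0, |R x| ≤ B) (hR0 : Tendsto R (𝓝[≠] 0) (𝓝 0)) :
    Tendsto (fun c : ℝ => ∫ y, g y * R (c • y) ∂μ) (𝓝[>] 0) (𝓝 0) := by
  have hlim := tendsto_integral_filter_of_dominated_convergence (μ := μ) (l := 𝓝[>] (0 : ℝ))
    (F := fun c y => g y * R (c • y)) (f := 0) (fun y => ‖g y‖ * B)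
    (Eventually.of_forall fun c => hg.aestronglyMeasurable.mul
      (hR.comp (continuous_const_smul c).measurable).aestronglyMeasurable)
    ?_ (hg.norm.mul_const B) ?_
  · simpa using hlim
  · filter_upwards [self_mem_nhdsWithin] with c hc
    filter_upwards [μ.ae_ne 0] with y hy
    rw [norm_mul, Real.norm_eq_abs (R _)]
    exact mul_le_mul_of_nonneg_left (hRB _ (smul_ne_zero (ne_of_gt hc) hy)) (norm_nonneg _)
  · filter_upwards [μ.ae_ne 0] with y hy
    simpa using (hR0.comp (tendsto_smul_nhdsNE_zero hy)).const_mul (g y)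

lemma exists_abs_indicator_div_rpow_norm_le {E : Type*} [NormedAddCommGroup E] {W : Set E}
    {F : E → ℝ} {C k : ℝ} (hk : 0 ≤ k) (hFW : ∀ x ∈ W, |F x| ≤ C)
    (hF0 : Tendsto (fun x => F x / ‖x‖ ^ k) (𝓝[≠] 0) (𝓝 0)) :
    ∃ B, ∀ x ≠ 0, |W.indicator F x / ‖x‖ ^ k| ≤ B := by
  obtain ⟨δ, hδ, hsmall⟩ := Metric.eventually_nhds_iff.1
    (eventually_nhdsWithin_iff.1 ((hF0.abs.eventually (gt_mem_nhds (show |(0:ℝ)| < 1 by simp)))))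
  refine ⟨max 1 (C / δ ^ k), fun x hx => ?_⟩
  have hxk : 0 < ‖x‖ ^ k := rpow_pos_of_pos (norm_pos_iff.2 hx) k
  by_cases hxW : x ∈ W
  · rw [Set.indicator_of_mem hxW]
    rcases lt_or_ge ‖x‖ δ with hxδ | hxδ
    · exact (hsmall (by simpa using hxδ) hx).le.trans (le_max_left _ _)
    · refine le_max_of_le_right ?_
      rw [abs_div, abs_of_pos hxk]
      exact div_le_div₀ ((abs_nonneg _).trans (hFW x hxW)) (hFW x hxW) (by positivity)
        (rpow_le_rpow hδ.le hxδ hk)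
  · simp [Set.indicator_of_notMem hxW]

lemma tendsto_indicator_div_rpow_norm {E : Type*} [NormedAddCommGroup E] {W : Set E}
    {F : E → ℝ} {k : ℝ} {l : Filter E} (hF : Tendsto (fun x => F x / ‖x‖ ^ k) l (𝓝 0)) :
    Tendsto (fun x => W.indicator F x / ‖x‖ ^ k) l (𝓝 0) := by
  refine squeeze_zero_norm (a := fun x => ‖F x / ‖x‖ ^ k‖) (fun x => ?_) (by simpa using hF.norm)
  rw [norm_div, norm_div]
  exact div_le_div_of_nonneg_right (norm_indicator_le_norm_self _ _) (norm_nonneg _)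

lemma tendsto_sqrt_nhdsGT_zero : Tendsto (√·) (𝓝[>] (0 : ℝ)) (𝓝[>] 0) := by
  refine tendsto_nhdsWithin_iff.2 ⟨?_, ?_⟩
  · exact (continuous_sqrt.tendsto' 0 0 sqrt_zero).mono_left nhdsWithin_le_nhds
  · filter_upwards [self_mem_nhdsWithin] with t ht
    exact sqrt_pos.2 ht

theorem stmt12_general (n : ℕ) (hn : 1 ≤ n) (k m α : ℝ) (hk : 0 ≤ k)
    (hcase : (0 < α ∧ α < 1 ∧ 0 < m) ∨ (1 < α ∧ 0 < m / (α - 1) - (n : ℝ) / 2 - k / 2))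
    (W : Set (EuclideanSpace ℝ (Fin n))) (hW : MeasurableSet W)
    (F : EuclideanSpace ℝ (Fin n) → ℝ) (hFmeas : Measurable F)
    (hFbdd : ∃ C : ℝ, ∀ x ∈ W, |F x| ≤ C)
    (hFsmall : Filter.Tendsto (fun x : EuclideanSpace ℝ (Fin n) => F x / ‖x‖ ^ k)
      (𝓝[≠] (0 : EuclideanSpace ℝ (Fin n))) (𝓝 0)) :
    (fun t : ℝ => t ^ (-(n : ℝ) / 2) *
        ∫ x in W, Hprofile α (‖x‖ / Real.sqrt t) ^ m * F x)
      =o[𝓝[>] (0 : ℝ)] fun t : ℝ => t ^ (k / 2) := by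
  -- Lebesgue measure on ℝⁿ is atomless only for `n ≥ 1`.
  have : Nonempty (Fin n) := ⟨⟨0, hn⟩⟩
  have hg : Integrable fun y : EuclideanSpace ℝ (Fin n) => Hprofile α ‖y‖ ^ m * ‖y‖ ^ k := by
    rcases hcase with ⟨-, hα1, hm⟩ | ⟨hα1, hdim⟩
    · exact integrable_Hprofile_rpow_mul_norm_rpow_of_lt_one _ hα1 hm hk
    · have hp : 0 < m / (α - 1) := by linarith [n.cast_nonneg (α := ℝ)]
      refine integrable_Hprofile_rpow_mul_norm_rpow_of_one_lt _ hα1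
        ((div_pos_iff_of_pos_right (by linarith)).1 hp).le hk ?_
      rw [finrank_euclideanSpace_fin]
      linarith
  obtain ⟨C, hC⟩ := hFbdd
  obtain ⟨B, hB⟩ := exists_abs_indicator_div_rpow_norm_le hk hC hFsmall
  have hlim := (tendsto_integral_mul_comp_smul_nhdsGT_zero
    (R := fun x => W.indicator F x / ‖x‖ ^ k) hg ((hFmeas.indicator hW).div (by fun_prop)) hB
    (tendsto_indicator_div_rpow_norm hFsmall)).comp tendsto_sqrt_nhdsGT_zero
  rw [isLittleO_iff_tendsto' ?_]
  · refine hlim.congr' ?_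
    filter_upwards [self_mem_nhdsWithin] with t ht
    have hc : 0 < √t := sqrt_pos.2 ht
    rw [Function.comp_apply, ← integral_mul_comp_smul_div_rpow _ _ _ _ hc,
      setIntegral_comp_norm_div_mul_eq _ (fun r => Hprofile α r ^ m) F hW hc,
      finrank_euclideanSpace_fin, rpow_div_two_eq_sqrt _ ht.le, rpow_div_two_eq_sqrt _ ht.le,
      rpow_neg hc.le, rpow_natCast, inv_mul_cancel_left₀ (pow_ne_zero _ hc.ne')]
  · filter_upwards [self_mem_nhdsWithin] with t ht h0
    exact absurd h0 (rpow_pos_of_pos ht _).ne'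

/-- Let `k ≥ 0`, `m` real, and `α > 0` with either (`0 < α < 1` and
`m > 0`) or (`α > 1` and `m/(α-1) - n/2 - k/2 > 0`). If `W ⊆ ℝⁿ` is measurable and
`F : ℝⁿ → ℝ` is measurable, bounded on `W`, and satisfies `F(x)/‖x‖^k → 0` as `x → 0`
(through `x ≠ 0`), then as `t → 0⁺`:
`t^{-n/2} ∫_W H(‖x‖/√t)^m F(x) dx = o(t^{k/2})`. -/
theorem stmt12 (n : ℕ) (hn : 1 ≤ n) (k m α : ℝ) (hk : 0 ≤ k) (hα : 0 < α)
    (hcase : (0 < α ∧ α < 1 ∧ 0 < m) ∨ (1 < α ∧ 0 < m / (α - 1) - (n : ℝ) / 2 - k / 2))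
    (W : Set (EuclideanSpace ℝ (Fin n))) (hW : MeasurableSet W)
    (F : EuclideanSpace ℝ (Fin n) → ℝ) (hFmeas : Measurable F)
    (hFbdd : ∃ C : ℝ, ∀ x ∈ W, |F x| ≤ C)
    (hFsmall : Filter.Tendsto (fun x : EuclideanSpace ℝ (Fin n) => F x / ‖x‖ ^ k)
      (𝓝[≠] (0 : EuclideanSpace ℝ (Fin n))) (𝓝 0)) :
    (fun t : ℝ => t ^ (-(n : ℝ) / 2) *
        ∫ x in W, Hprofile α (‖x‖ / Real.sqrt t) ^ m * F x)
      =o[𝓝[>] (0 : ℝ)] fun t : ℝ => t ^ (k / 2) :=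
  stmt12_general n hn k m α hk hcase W hW F hFmeas hFbdd hFsmall
end
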